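/- Let U ⊆ ℝ² be open, let f: U → ℝ be C², and for C² functions v: U → ℝ define B₂(f, v) = −(∇_f² v)·(∇_f f) + (1/2)·(∇_f f)²·∂_z v and B₁(f, v) = f·B₂(f, v) − (3/2)·(∇_f f)²·∇_f v. Then for every C^∞ function w with compact support contained in U, ∫_U B₁(f, w) dμ = ∫_U B₂(f, f·w) dμ. -/

import Mathlib

open MeasureTheory Set

/-- Partial derivative in the `x` (first) direction. -/
noncomputable def pdx (g : ℝ × ℝ → ℝ) (p : ℝ × ℝ) : ℝ := fderiv ℝ g p (1, 0)

/-- Partial derivative in the `z` (second) direction. -/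
noncomputable def pdz (g : ℝ × ℝ → ℝ) (p : ℝ × ℝ) : ℝ := fderiv ℝ g p (0, 1)

/-- The intrinsic gradient operator `∇_f g = ∂_x g − f·∂_z g`. -/
noncomputable def igrad (f g : ℝ × ℝ → ℝ) (p : ℝ × ℝ) : ℝ := pdx g p - f p * pdz g p

/-- `B₂(f, v) = −(∇_f² v)·(∇_f f) + (1/2)·(∇_f f)²·∂_z v`. -/
noncomputable def B2 (f v : ℝ × ℝ → ℝ) (p : ℝ × ℝ) : ℝ :=
  -(igrad f (igrad f v) p) * igrad f f p + 1 / 2 * (igrad f f p) ^ 2 * pdz v p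

/-- `B₁(f, v) = f·B₂(f, v) − (3/2)·(∇_f f)²·∇_f v`. -/
noncomputable def B1 (f v : ℝ × ℝ → ℝ) (p : ℝ × ℝ) : ℝ :=
  f p * B2 f v p - 3 / 2 * (igrad f f p) ^ 2 * igrad f v p

open Filter Topology

lemma igrad_apply (f g : ℝ × ℝ → ℝ) (p : ℝ × ℝ) :
    igrad f g p = pdx g p - f p * pdz g p := rfl

/-- Auxiliary function `P = −½(∇_f f)²·w`. -/
noncomputable def PP (f w : ℝ × ℝ → ℝ) : ℝ × ℝ → ℝ :=
  fun q => -(1/2) * (igrad f f q * igrad f f q) * w q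

/-- Auxiliary function `Q = ½f(∇_f f)²·w`. -/
noncomputable def QQ (f w : ℝ × ℝ → ℝ) : ℝ × ℝ → ℝ :=
  fun q => (1/2) * (f q * (igrad f f q * igrad f f q)) * w q

section pdlemmas
variable {g h : ℝ × ℝ → ℝ} {p : ℝ × ℝ}

lemma pd_mul (v : ℝ × ℝ) (hg : DifferentiableAt ℝ g p) (hh : DifferentiableAt ℝ h p) :
    fderiv ℝ (fun q => g q * h q) p v = fderiv ℝ g p v * h p + g p * fderiv ℝ h p v := by
  rw [fderiv_fun_mul hg hh]
  simp only [ContinuousLinearMap.add_apply, ContinuousLinearMap.smul_apply, smul_eq_mul]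
  ring

lemma pd_add (v : ℝ × ℝ) (hg : DifferentiableAt ℝ g p) (hh : DifferentiableAt ℝ h p) :
    fderiv ℝ (fun q => g q + h q) p v = fderiv ℝ g p v + fderiv ℝ h p v := by
  rw [fderiv_fun_add hg hh]; simp

lemma pd_sub (v : ℝ × ℝ) (hg : DifferentiableAt ℝ g p) (hh : DifferentiableAt ℝ h p) :
    fderiv ℝ (fun q => g q - h q) p v = fderiv ℝ g p v - fderiv ℝ h p v := by
  rw [fderiv_fun_sub hg hh]; simp

lemma pd_const_mul (v : ℝ × ℝ) (c : ℝ) (hg : DifferentiableAt ℝ g p) :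
    fderiv ℝ (fun q => c * g q) p v = c * fderiv ℝ g p v := by
  rw [fderiv_const_mul hg]; simp

lemma pdx_mul (hg : DifferentiableAt ℝ g p) (hh : DifferentiableAt ℝ h p) :
    pdx (fun q => g q * h q) p = pdx g p * h p + g p * pdx h p := pd_mul _ hg hh

lemma pdz_mul (hg : DifferentiableAt ℝ g p) (hh : DifferentiableAt ℝ h p) :
    pdz (fun q => g q * h q) p = pdz g p * h p + g p * pdz h p := pd_mul _ hg hh

lemma pdx_add (hg : DifferentiableAt ℝ g p) (hh : DifferentiableAt ℝ h p) :
    pdx (fun q => g q + h q) p = pdx g p + pdx h p := pd_add _ hg hh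

lemma pdz_add (hg : DifferentiableAt ℝ g p) (hh : DifferentiableAt ℝ h p) :
    pdz (fun q => g q + h q) p = pdz g p + pdz h p := pd_add _ hg hh

lemma pdx_sub (hg : DifferentiableAt ℝ g p) (hh : DifferentiableAt ℝ h p) :
    pdx (fun q => g q - h q) p = pdx g p - pdx h p := pd_sub _ hg hh

lemma pdz_sub (hg : DifferentiableAt ℝ g p) (hh : DifferentiableAt ℝ h p) :
    pdz (fun q => g q - h q) p = pdz g p - pdz h p := pd_sub _ hg hh

lemma pdx_const_mul (c : ℝ) (hg : DifferentiableAt ℝ g p) :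
    pdx (fun q => c * g q) p = c * pdx g p := pd_const_mul _ c hg

lemma pdz_const_mul (c : ℝ) (hg : DifferentiableAt ℝ g p) :
    pdz (fun q => c * g q) p = c * pdz g p := pd_const_mul _ c hg

lemma pdx_congr (he : g =ᶠ[𝓝 p] h) : pdx g p = pdx h p := by
  unfold pdx; rw [he.fderiv_eq]

lemma pdz_congr (he : g =ᶠ[𝓝 p] h) : pdz g p = pdz h p := by
  unfold pdz; rw [he.fderiv_eq]

lemma fderiv_zero_on_open {V : Set (ℝ × ℝ)} (hV : IsOpen V)
    (h0 : ∀ q ∈ V, g q = 0) (hp : p ∈ V) : fderiv ℝ g p = 0 := by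
  have he : g =ᶠ[𝓝 p] fun _ => (0 : ℝ) := eventually_of_mem (hV.mem_nhds hp) h0
  rw [he.fderiv_eq]; exact fderiv_const_apply 0

lemma pdx_zero_on_open {V : Set (ℝ × ℝ)} (hV : IsOpen V)
    (h0 : ∀ q ∈ V, g q = 0) (hp : p ∈ V) : pdx g p = 0 := by
  unfold pdx; rw [fderiv_zero_on_open hV h0 hp]; rfl

lemma pdz_zero_on_open {V : Set (ℝ × ℝ)} (hV : IsOpen V)
    (h0 : ∀ q ∈ V, g q = 0) (hp : p ∈ V) : pdz g p = 0 := by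
  unfold pdz; rw [fderiv_zero_on_open hV h0 hp]; rfl

end pdlemmas

lemma integral_pd_zero {g g' : ℝ × ℝ → ℝ} {v : ℝ × ℝ}
    (hg : Integrable g volume) (hg' : Integrable g' volume)
    (hd : ∀ x, HasLineDerivAt ℝ g (g' x) x v) :
    ∫ x, g' x = 0 := by
  have H := integral_bilinear_hasLineDerivAt_right_eq_neg_left_of_integrable
    (μ := volume) (B := ContinuousLinearMap.mul ℝ ℝ) (f := g) (f' := g')
    (g := fun _ => (1 : ℝ)) (g' := fun _ => (0 : ℝ))
    (by simpa using hg') (by simpa using (integrable_zero _ _ (volume : Measure (ℝ × ℝ))))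
    (by simpa using hg) (fun x _ => hd x)
    (fun x _ => by simpa using (hasFDerivAt_const (1 : ℝ) x).hasLineDerivAt v)
  simp only [ContinuousLinearMap.mul_apply', mul_zero, mul_one, integral_zero] at H
  linarith

/-- The pointwise identity on `U`. -/
lemma key_U (U : Set (ℝ × ℝ)) (hU : IsOpen U) (f : ℝ × ℝ → ℝ)
    (hf : ContDiffOn ℝ 2 f U) (w : ℝ × ℝ → ℝ) (hw : ContDiff ℝ (⊤ : ℕ∞) w)
    (p : ℝ × ℝ) (hp : p ∈ U) :
    B2 f (fun q => f q * w q) p = B1 f w p + pdx (PP f w) p + pdz (QQ f w) p := by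
  have hc2 : ContDiffAt ℝ 2 f p := hf.contDiffAt (hU.mem_nhds hp)
  have hfd : DifferentiableAt ℝ f p := hc2.differentiableAt two_ne_zero
  have hf1 : ContDiffAt ℝ 1 (fderiv ℝ f) p := hc2.fderiv_right (by norm_num)
  have hfx : DifferentiableAt ℝ (pdx f) p :=
    ((hf1.clm_apply contDiffAt_const).differentiableAt one_ne_zero)
  have hfz : DifferentiableAt ℝ (pdz f) p :=
    ((hf1.clm_apply contDiffAt_const).differentiableAt one_ne_zero)
  have hwd : DifferentiableAt ℝ w p := (hw.differentiable (by simp)).differentiableAt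
  have hw1 : ContDiff ℝ (⊤ : ℕ∞) (fderiv ℝ w) := hw.fderiv_right (by simp)
  have hwx : DifferentiableAt ℝ (pdx w) p :=
    ((hw1.clm_apply contDiff_const).differentiable (by simp)).differentiableAt
  have hwz : DifferentiableAt ℝ (pdz w) p :=
    ((hw1.clm_apply contDiff_const).differentiable (by simp)).differentiableAt
  have hA : DifferentiableAt ℝ (igrad f f) p := hfx.sub (hfd.mul hfz)
  have hG : DifferentiableAt ℝ (igrad f w) p := hwx.sub (hfd.mul hwz)
  have hAfun : igrad f f = fun q => pdx f q - f q * pdz f q := rfl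
  have hGfun : igrad f w = fun q => pdx w q - f q * pdz w q := rfl
  have hv_ev : igrad f (fun q => f q * w q)
      =ᶠ[𝓝 p] fun q => igrad f f q * w q + f q * igrad f w q := by
    filter_upwards [hU.mem_nhds hp] with q hq
    have hfdq : DifferentiableAt ℝ f q :=
      (hf.contDiffAt (hU.mem_nhds hq)).differentiableAt two_ne_zero
    have hwdq : DifferentiableAt ℝ w q := (hw.differentiable (by simp)).differentiableAt
    simp only [igrad_apply, pdx_mul hfdq hwdq, pdz_mul hfdq hwdq]
    ring
  simp only [B1, B2, igrad_apply]
  rw [pdx_congr hv_ev, pdz_congr hv_ev]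
  rw [pdx_add (hA.fun_mul hwd) (hfd.fun_mul hG), pdz_add (hA.fun_mul hwd) (hfd.fun_mul hG),
      pdx_mul hA hwd, pdz_mul hA hwd, pdx_mul hfd hG, pdz_mul hfd hG]
  rw [show PP f w = fun q => -(1/2) * (igrad f f q * igrad f f q) * w q from rfl,
      show QQ f w = fun q => (1/2) * (f q * (igrad f f q * igrad f f q)) * w q from rfl]
  rw [pdx_mul ((differentiableAt_const (-(1/2) : ℝ)).fun_mul (hA.fun_mul hA)) hwd,
      pdx_const_mul (-(1/2)) (hA.fun_mul hA), pdx_mul hA hA]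
  rw [pdz_mul ((differentiableAt_const ((1/2) : ℝ)).fun_mul (hfd.fun_mul (hA.fun_mul hA))) hwd,
      pdz_const_mul (1/2) (hfd.fun_mul (hA.fun_mul hA)), pdz_mul hfd (hA.fun_mul hA), pdz_mul hA hA]
  rw [pdz_mul hfd hwd]
  simp only [hAfun, hGfun]
  rw [pdx_sub hfx (hfd.fun_mul hfz), pdz_sub hfx (hfd.fun_mul hfz),
      pdx_mul hfd hfz, pdz_mul hfd hfz,
      pdx_sub hwx (hfd.fun_mul hwz), pdz_sub hwx (hfd.fun_mul hwz),
      pdx_mul hfd hwz, pdz_mul hfd hwz]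
  ring

/-- for `f` C² on an open set `U` and every C^∞ function `w` with compact
support in `U`, `∫_U B₁(f, w) dμ = ∫_U B₂(f, f·w) dμ`. -/
theorem stmt17 (U : Set (ℝ × ℝ)) (hU : IsOpen U) (f : ℝ × ℝ → ℝ)
    (hf : ContDiffOn ℝ 2 f U)
    (w : ℝ × ℝ → ℝ) (hw : ContDiff ℝ (⊤ : ℕ∞) w)
    (hws : HasCompactSupport w) (hwU : tsupport w ⊆ U) :
    ∫ p in U, B1 f w p = ∫ p in U, B2 f (fun q => f q * w q) p := by
  set V : Set (ℝ × ℝ) := (tsupport w)ᶜ with hVdef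
  have hVo : IsOpen V := (isClosed_tsupport w).isOpen_compl
  have hcover : ∀ p : ℝ × ℝ, p ∈ U ∨ p ∈ V := by
    intro p
    by_cases h : p ∈ tsupport w
    · exact Or.inl (hwU h)
    · exact Or.inr h
  -- vanishing facts on V
  have hw0 : ∀ q ∈ V, w q = 0 := fun q hq => image_eq_zero_of_notMem_tsupport hq
  have hwx0 : ∀ q ∈ V, pdx w q = 0 := fun q hq => pdx_zero_on_open hVo hw0 hq
  have hwz0 : ∀ q ∈ V, pdz w q = 0 := fun q hq => pdz_zero_on_open hVo hw0 hq
  have hG0 : ∀ q ∈ V, igrad f w q = 0 := by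
    intro q hq; rw [igrad_apply, hwx0 q hq, hwz0 q hq]; ring
  have hGx0 : ∀ q ∈ V, pdx (igrad f w) q = 0 := fun q hq => pdx_zero_on_open hVo hG0 hq
  have hGz0 : ∀ q ∈ V, pdz (igrad f w) q = 0 := fun q hq => pdz_zero_on_open hVo hG0 hq
  have hv0 : ∀ q ∈ V, f q * w q = 0 := by intro q hq; rw [hw0 q hq]; ring
  have hvx0 : ∀ q ∈ V, pdx (fun q => f q * w q) q = 0 := fun q hq =>
    pdx_zero_on_open hVo hv0 hq
  have hvz0 : ∀ q ∈ V, pdz (fun q => f q * w q) q = 0 := fun q hq =>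
    pdz_zero_on_open hVo hv0 hq
  have hGv0 : ∀ q ∈ V, igrad f (fun q => f q * w q) q = 0 := by
    intro q hq; rw [igrad_apply, hvx0 q hq, hvz0 q hq]; ring
  have hGvx0 : ∀ q ∈ V, pdx (igrad f (fun q => f q * w q)) q = 0 := fun q hq =>
    pdx_zero_on_open hVo hGv0 hq
  have hGvz0 : ∀ q ∈ V, pdz (igrad f (fun q => f q * w q)) q = 0 := fun q hq =>
    pdz_zero_on_open hVo hGv0 hq
  have hB2w0 : ∀ q ∈ V, B2 f w q = 0 := by
    intro q hq
    simp only [B2, igrad_apply]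
    rw [hGx0 q hq, hGz0 q hq, hwz0 q hq]; ring
  have hB1_0 : ∀ q ∈ V, B1 f w q = 0 := by
    intro q hq
    simp only [B1]
    rw [hB2w0 q hq, hG0 q hq]; ring
  have hB2v0 : ∀ q ∈ V, B2 f (fun q => f q * w q) q = 0 := by
    intro q hq
    simp only [B2, igrad_apply]
    rw [hGvx0 q hq, hGvz0 q hq, hvz0 q hq]; ring
  have hPP0 : ∀ q ∈ V, PP f w q = 0 := by
    intro q hq; simp [PP, hw0 q hq]
  have hQQ0 : ∀ q ∈ V, QQ f w q = 0 := by
    intro q hq; simp [QQ, hw0 q hq]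
  have hPx0 : ∀ q ∈ V, pdx (PP f w) q = 0 := fun q hq => pdx_zero_on_open hVo hPP0 hq
  have hQz0 : ∀ q ∈ V, pdz (QQ f w) q = 0 := fun q hq => pdz_zero_on_open hVo hQQ0 hq
  -- the pointwise identity everywhere
  have hkey : ∀ p : ℝ × ℝ,
      B2 f (fun q => f q * w q) p = B1 f w p + (pdx (PP f w) p + pdz (QQ f w) p) := by
    intro p
    rcases hcover p with hp | hp
    · rw [key_U U hU f hf w hw p hp]; ring
    · rw [hB2v0 p hp, hB1_0 p hp, hPx0 p hp, hQz0 p hp]; ring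
  -- differentiability / smoothness bookkeeping on U
  have hfC1 : ContDiffOn ℝ 1 (fderiv ℝ f) U := hf.fderiv_of_isOpen hU (by norm_num)
  have hpdxf : ContDiffOn ℝ 1 (pdx f) U := hfC1.clm_apply contDiffOn_const
  have hpdzf : ContDiffOn ℝ 1 (pdz f) U := hfC1.clm_apply contDiffOn_const
  have hAC : ContDiffOn ℝ 1 (igrad f f) U := hpdxf.sub ((hf.of_le one_le_two).mul hpdzf)
  have hwfd : ContDiff ℝ (⊤ : ℕ∞) (fderiv ℝ w) := hw.fderiv_right (by simp)
  have hpdxw : ContDiff ℝ (⊤ : ℕ∞) (pdx w) := hwfd.clm_apply contDiff_const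
  have hpdzw : ContDiff ℝ (⊤ : ℕ∞) (pdz w) := hwfd.clm_apply contDiff_const
  have hGC : ContDiffOn ℝ 1 (igrad f w) U :=
    ((hpdxw.of_le (by simp)).contDiffOn).sub
      ((hf.of_le one_le_two).mul ((hpdzw.of_le (by simp)).contDiffOn))
  have hvC2 : ContDiffOn ℝ 2 (fun q => f q * w q) U := hf.mul (show ContDiff ℝ 2 w from hw.of_le (WithTop.coe_le_coe.mpr le_top)).contDiffOn
  have hvfd : ContDiffOn ℝ 1 (fderiv ℝ (fun q => f q * w q)) U :=
    hvC2.fderiv_of_isOpen hU (by norm_num)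
  have hGvC : ContDiffOn ℝ 1 (igrad f (fun q => f q * w q)) U :=
    (hvfd.clm_apply contDiffOn_const).sub
      ((hf.of_le one_le_two).mul (hvfd.clm_apply contDiffOn_const))
  have hPPC : ContDiffOn ℝ 1 (PP f w) U :=
    (contDiffOn_const.mul (hAC.mul hAC)).mul (hw.of_le (by simp)).contDiffOn
  have hQQC : ContDiffOn ℝ 1 (QQ f w) U :=
    (contDiffOn_const.mul ((hf.of_le one_le_two).mul (hAC.mul hAC))).mul
      (hw.of_le (by simp)).contDiffOn
  -- continuity on U of all integrands
  have c_f : ContinuousOn f U := hf.continuousOn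
  have c_w : Continuous w := hw.continuous
  have c_A : ContinuousOn (igrad f f) U := hAC.continuousOn
  have c_G : ContinuousOn (igrad f w) U := hGC.continuousOn
  have c_Gx : ContinuousOn (pdx (igrad f w)) U :=
    (hGC.continuousOn_fderiv_of_isOpen hU le_rfl).clm_apply continuousOn_const
  have c_Gz : ContinuousOn (pdz (igrad f w)) U :=
    (hGC.continuousOn_fderiv_of_isOpen hU le_rfl).clm_apply continuousOn_const
  have c_Gvx : ContinuousOn (pdx (igrad f (fun q => f q * w q))) U :=
    (hGvC.continuousOn_fderiv_of_isOpen hU le_rfl).clm_apply continuousOn_const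
  have c_Gvz : ContinuousOn (pdz (igrad f (fun q => f q * w q))) U :=
    (hGvC.continuousOn_fderiv_of_isOpen hU le_rfl).clm_apply continuousOn_const
  have c_vz : ContinuousOn (pdz (fun q => f q * w q)) U :=
    hvfd.continuousOn.clm_apply continuousOn_const
  have c_B2w : ContinuousOn (B2 f w) U := by
    have hrw : B2 f w = fun p => -(pdx (igrad f w) p - f p * pdz (igrad f w) p) *
        igrad f f p + 1 / 2 * (igrad f f p) ^ 2 * pdz w p := rfl
    rw [hrw]
    exact (((c_Gx.sub (c_f.mul c_Gz)).neg.mul c_A).add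
      ((continuousOn_const.mul (c_A.pow 2)).mul (hpdzw.continuous.continuousOn)))
  have c_B1 : ContinuousOn (B1 f w) U := by
    have hrw : B1 f w = fun p => f p * B2 f w p - 3 / 2 * (igrad f f p) ^ 2 *
        igrad f w p := rfl
    rw [hrw]
    exact (c_f.mul c_B2w).sub ((continuousOn_const.mul (c_A.pow 2)).mul c_G)
  have c_B2v : ContinuousOn (B2 f (fun q => f q * w q)) U := by
    have hrw : B2 f (fun q => f q * w q) = fun p =>
        -(pdx (igrad f (fun q => f q * w q)) p - f p * pdz (igrad f (fun q => f q * w q)) p) *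
        igrad f f p + 1 / 2 * (igrad f f p) ^ 2 * pdz (fun q => f q * w q) p := rfl
    rw [hrw]
    exact (((c_Gvx.sub (c_f.mul c_Gvz)).neg.mul c_A).add
      ((continuousOn_const.mul (c_A.pow 2)).mul c_vz))
  have c_Px : ContinuousOn (pdx (PP f w)) U :=
    (hPPC.continuousOn_fderiv_of_isOpen hU le_rfl).clm_apply continuousOn_const
  have c_Qz : ContinuousOn (pdz (QQ f w)) U :=
    (hQQC.continuousOn_fderiv_of_isOpen hU le_rfl).clm_apply continuousOn_const
  -- gluing to global continuity and integrability
  have glue : ∀ g : ℝ × ℝ → ℝ, ContinuousOn g U → (∀ q ∈ V, g q = 0) → Continuous g := by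
    intro g hgU hgV
    rw [continuous_iff_continuousAt]
    intro p
    rcases hcover p with hp | hp
    · exact hgU.continuousAt (hU.mem_nhds hp)
    · have he : g =ᶠ[𝓝 p] fun _ => (0 : ℝ) := eventually_of_mem (hVo.mem_nhds hp) hgV
      exact ContinuousAt.congr continuousAt_const he.symm
  have integ : ∀ g : ℝ × ℝ → ℝ, ContinuousOn g U → (∀ q ∈ V, g q = 0) →
      Integrable g volume := by
    intro g hgU hgV
    exact (glue g hgU hgV).integrable_of_hasCompactSupport
      (HasCompactSupport.intro hws (fun x hx => hgV x hx))
  have hB1int : Integrable (B1 f w) volume := integ _ c_B1 hB1_0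
  have hB2int : Integrable (B2 f (fun q => f q * w q)) volume := integ _ c_B2v hB2v0
  have hPint : Integrable (PP f w) volume := integ _ hPPC.continuousOn hPP0
  have hQint : Integrable (QQ f w) volume := integ _ hQQC.continuousOn hQQ0
  have hDxint : Integrable (fun p => pdx (PP f w) p) volume := integ _ c_Px hPx0
  have hDzint : Integrable (fun p => pdz (QQ f w) p) volume := integ _ c_Qz hQz0
  -- differentiability at every point, for line derivatives
  have hAdiff : ∀ p ∈ U, DifferentiableAt ℝ (igrad f f) p := by
    intro p hp
    exact (hAC.contDiffAt (hU.mem_nhds hp)).differentiableAt one_ne_zero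
  have hlineP : ∀ p : ℝ × ℝ, HasLineDerivAt ℝ (PP f w) (pdx (PP f w) p) p (1, 0) := by
    intro p
    rcases hcover p with hp | hp
    · have hwd : DifferentiableAt ℝ w p := (hw.differentiable (by simp)).differentiableAt
      have hd : DifferentiableAt ℝ (PP f w) p :=
        ((differentiableAt_const (-(1/2) : ℝ)).mul ((hAdiff p hp).mul (hAdiff p hp))).mul hwd
      exact hd.hasFDerivAt.hasLineDerivAt (1, 0)
    · have he : PP f w =ᶠ[𝓝 p] fun _ => (0 : ℝ) :=
        eventually_of_mem (hVo.mem_nhds hp) hPP0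
      have h0 : pdx (PP f w) p = 0 := hPx0 p hp
      rw [h0]
      have := ((hasFDerivAt_const (𝕜 := ℝ) (0 : ℝ) p).congr_of_eventuallyEq he).hasLineDerivAt
        ((1 : ℝ), (0 : ℝ))
      simpa using this
  have hlineQ : ∀ p : ℝ × ℝ, HasLineDerivAt ℝ (QQ f w) (pdz (QQ f w) p) p (0, 1) := by
    intro p
    rcases hcover p with hp | hp
    · have hwd : DifferentiableAt ℝ w p := (hw.differentiable (by simp)).differentiableAt
      have hfd : DifferentiableAt ℝ f p :=
        (hf.contDiffAt (hU.mem_nhds hp)).differentiableAt two_ne_zero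
      have hd : DifferentiableAt ℝ (QQ f w) p :=
        ((differentiableAt_const ((1/2) : ℝ)).mul
          (hfd.mul ((hAdiff p hp).mul (hAdiff p hp)))).mul hwd
      exact hd.hasFDerivAt.hasLineDerivAt (0, 1)
    · have he : QQ f w =ᶠ[𝓝 p] fun _ => (0 : ℝ) :=
        eventually_of_mem (hVo.mem_nhds hp) hQQ0
      have h0 : pdz (QQ f w) p = 0 := hQz0 p hp
      rw [h0]
      have := ((hasFDerivAt_const (𝕜 := ℝ) (0 : ℝ) p).congr_of_eventuallyEq he).hasLineDerivAt
        ((0 : ℝ), (1 : ℝ))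
      simpa using this
  have hDx0 : ∫ p, pdx (PP f w) p = 0 := integral_pd_zero hPint hDxint hlineP
  have hDz0 : ∫ p, pdz (QQ f w) p = 0 := integral_pd_zero hQint hDzint hlineQ
  -- assembly
  have e1 : ∫ p in U, B1 f w p = ∫ p, B1 f w p :=
    setIntegral_eq_integral_of_forall_compl_eq_zero (fun x hx => by
      rcases hcover x with h | h
      · exact absurd h hx
      · exact hB1_0 x h)
  have e2 : ∫ p in U, B2 f (fun q => f q * w q) p = ∫ p, B2 f (fun q => f q * w q) p :=
    setIntegral_eq_integral_of_forall_compl_eq_zero (fun x hx => by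
      rcases hcover x with h | h
      · exact absurd h hx
      · exact hB2v0 x h)
  rw [e1, e2]
  have e3 : (fun p => B2 f (fun q => f q * w q) p) =
      fun p => B1 f w p + (pdx (PP f w) p + pdz (QQ f w) p) := funext hkey
  have hsum : Integrable (fun p => pdx (PP f w) p + pdz (QQ f w) p) volume :=
    hDxint.add hDzint
  have h4 : ∫ p, B2 f (fun q => f q * w q) p
      = (∫ p, B1 f w p) + ∫ p, (pdx (PP f w) p + pdz (QQ f w) p) := by
    rw [e3]; exact integral_add hB1int hsum
  have h5 : ∫ p, (pdx (PP f w) p + pdz (QQ f w) p)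
      = (∫ p, pdx (PP f w) p) + ∫ p, pdz (QQ f w) p := integral_add hDxint hDzint
  rw [h4, h5, hDx0, hDz0]; ring
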